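/- For every λ-term M, for every Φ-term t such that ⟨M⟩ rewrites to t in finitely many Φ-steps, and for every occurrence of a constructor c_{x,N} in t, the λ-term N is a subterm of M. -/

import Mathlib

/-- Untyped λ-terms over variables drawn from ℕ (a denumerable totally ordered set). -/
inductive Lam : Type
  | var : ℕ → Lam
  | lam : ℕ → Lam → Lam
  | app : Lam → Lam → Lam
deriving DecidableEq, Repr

namespace Lam

/-- Capture-permitting substitution M{N/x} (adequate for weak reduction of closed terms). -/
def subst : Lam → ℕ → Lam → Lam
  | var y, x, N => if y = x then N else var y
  | lam y M, x, N => if y = x then lam y M else lam y (subst M x N)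
  | app M₁ M₂, x, N => app (subst M₁ x N) (subst M₂ x N)

/-- Simultaneous substitution along a partial assignment of terms to variables. -/
def msubst : Lam → (ℕ → Option Lam) → Lam
  | var y, σ => (σ y).getD (var y)
  | lam y M, σ => lam y (msubst M (fun z => if z = y then none else σ z))
  | app M₁ M₂, σ => app (msubst M₁ σ) (msubst M₂ σ)

/-- The assignment sending each `xᵢ` to `tᵢ` (first match wins). -/
def substOf (xs : List ℕ) (ts : List Lam) : ℕ → Option Lam :=
  fun y => (xs.zip ts).lookup y

/-- Values: variables and abstractions. -/
def IsValue : Lam → Prop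
  | var _ => True
  | lam _ _ => True
  | app _ _ => False

/-- Weak call-by-value reduction. -/
inductive CbvStep : Lam → Lam → Prop
  | beta {x : ℕ} {M V : Lam} : IsValue V → CbvStep (app (lam x M) V) (subst M x V)
  | appL {M N L : Lam} : CbvStep M N → CbvStep (app M L) (app N L)
  | appR {M N L : Lam} : CbvStep M N → CbvStep (app L M) (app L N)

/-- A →v-normal form. -/
def CbvNormal (M : Lam) : Prop := ¬ ∃ N, CbvStep M N

/-- Free variables, as a finite set. -/
def fv : Lam → Finset ℕ
  | var x => {x}
  | lam x M => fv M \ {x}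
  | app M N => fv M ∪ fv N

/-- The sequence (without repetitions, in variable order) of free variables of `M`. -/
def fvList (M : Lam) : List ℕ := (fv M).sort (· ≤ ·)

def Closed (M : Lam) : Prop := fv M = ∅

/-- The size |M| of a λ-term. -/
def size : Lam → ℕ
  | var _ => 1
  | lam _ M => size M + 1
  | app M N => size M + size N + 1

end Lam

/-- `NSteps r n a b`: `a` reduces to `b` in exactly `n` `r`-steps. -/
def NSteps {α : Type*} (r : α → α → Prop) : ℕ → α → α → Prop
  | 0 => fun a b => a = b
  | n + 1 => fun a c => ∃ b, r a b ∧ NSteps r n b c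

/-- Terms of the constructor rewrite system Φ: variables, the binary function symbol
`app`, and for every λ-term `M` and variable `x` a constructor `c_{x,M}` (here `con x M`),
whose arity is the length of `FV(λx.M)`. -/
inductive PTerm : Type
  | var : ℕ → PTerm
  | app : PTerm → PTerm → PTerm
  | con : ℕ → Lam → List PTerm → PTerm

namespace PTerm

/-- Well-formed Φ-terms: every constructor is applied to as many arguments as its arity. -/
inductive WF : PTerm → Prop
  | var {x} : WF (var x)
  | app {u v} : WF u → WF v → WF (app u v)
  | con {x M ts} : ts.length = (Lam.fvList (Lam.lam x M)).length →
      (∀ t ∈ ts, WF t) → WF (con x M ts)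

/-- Constructor terms: built only from constructors. -/
inductive IsConTerm : PTerm → Prop
  | con {x M ts} : (∀ t ∈ ts, IsConTerm t) → IsConTerm (con x M ts)

/-- Canonical closed Φ-terms. -/
inductive Canonical : PTerm → Prop
  | con {t} : IsConTerm t → Canonical t
  | app {u v} : Canonical u → Canonical v → Canonical (app u v)

/-- Closed Φ-terms contain no variables. -/
inductive ClosedP : PTerm → Prop
  | app {u v} : ClosedP u → ClosedP v → ClosedP (app u v)
  | con {x M ts} : (∀ t ∈ ts, ClosedP t) → ClosedP (con x M ts)

/-- Substitution of Φ-terms for variables. -/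
def psubst (σ : ℕ → Option PTerm) : PTerm → PTerm
  | var y => (σ y).getD (var y)
  | app u v => app (psubst σ u) (psubst σ v)
  | con x M ts => con x M (ts.attach.map (fun t => psubst σ t.1))
decreasing_by
  all_goals simp_wf
  all_goals try have := List.sizeOf_lt_of_mem t.2
  all_goals omega

/-- The assignment sending each `xᵢ` to `tᵢ`. -/
def substOfP (xs : List ℕ) (ts : List PTerm) : ℕ → Option PTerm :=
  fun y => (xs.zip ts).lookup y

/-- Variables occurring in a Φ-term. -/
def pvars : PTerm → List ℕ
  | var y => [y]
  | app u v => pvars u ++ pvars v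
  | con _ _ ts => ts.attach.flatMap (fun t => pvars t.1)
decreasing_by
  all_goals simp_wf
  all_goals try have := List.sizeOf_lt_of_mem t.2
  all_goals omega

end PTerm

/-- The translation ⟨·⟩ from λ-terms to Φ-terms. -/
def transPhi : Lam → PTerm
  | .var x => .var x
  | .lam x M => .con x M ((Lam.fvList (.lam x M)).map .var)
  | .app M N => .app (transPhi M) (transPhi N)

/-- The readback ⟦·⟧ from Φ-terms to λ-terms. -/
def readback : PTerm → Lam
  | .var x => .var x
  | .app u v => .app (readback u) (readback v)
  | .con x M ts =>
      Lam.msubst (.lam x M)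
        (Lam.substOf (Lam.fvList (.lam x M)) (ts.attach.map (fun t => readback t.1)))
decreasing_by
  all_goals simp_wf
  all_goals try have := List.sizeOf_lt_of_mem t.2
  all_goals omega

/-- One-step rewriting in Φ: the rule app(c_{x,M}(x₁,…,xₙ), x) → ⟨M⟩ (matched variables
instantiated by constructor terms), closed under arbitrary contexts. -/
inductive PhiStep : PTerm → PTerm → Prop
  | root {x : ℕ} {M : Lam} {ts : List PTerm} {v : PTerm} :
      (∀ t ∈ ts, PTerm.IsConTerm t) → PTerm.IsConTerm v →
      ts.length = (Lam.fvList (.lam x M)).length →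
      PhiStep (.app (.con x M ts) v)
        (PTerm.psubst (PTerm.substOfP (Lam.fvList (.lam x M) ++ [x]) (ts ++ [v])) (transPhi M))
  | appL {u u' v} : PhiStep u u' → PhiStep (.app u v) (.app u' v)
  | appR {u v v'} : PhiStep v v' → PhiStep (.app u v) (.app u v')
  | conArg {x M ts₁ t t' ts₂} : PhiStep t t' →
      PhiStep (.con x M (ts₁ ++ t :: ts₂)) (.con x M (ts₁ ++ t' :: ts₂))

/-- Φ-normal forms. -/
def PhiNormal (t : PTerm) : Prop := ¬ ∃ u, PhiStep t u

/-- `Subterm N M`: N is a subterm of M. -/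
inductive Subterm : Lam → Lam → Prop
  | refl (M) : Subterm M M
  | lam {M x N} : Subterm M N → Subterm M (Lam.lam x N)
  | appL {M N L} : Subterm M N → Subterm M (Lam.app N L)
  | appR {M N L} : Subterm M N → Subterm M (Lam.app L N)

/-- `ConOccurs x N t`: the constructor c_{x,N} occurs in the Φ-term t. -/
inductive ConOccurs (x : ℕ) (N : Lam) : PTerm → Prop
  | here {ts} : ConOccurs x N (PTerm.con x N ts)
  | appL {u v} : ConOccurs x N u → ConOccurs x N (PTerm.app u v)
  | appR {u v} : ConOccurs x N v → ConOccurs x N (PTerm.app u v)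
  | conArg {y M ts t} : t ∈ ts → ConOccurs x N t → ConOccurs x N (PTerm.con y M ts)

theorem Subterm.trans {A B C : Lam} (hAB : Subterm A B) (hBC : Subterm B C) : Subterm A C := by
  induction hBC with
  | refl => exact hAB
  | lam _ ih => exact .lam ih
  | appL _ ih => exact .appL ih
  | appR _ ih => exact .appR ih

theorem subterm_of_conOccurs_transPhi {x : ℕ} {N : Lam} :
    ∀ {P : Lam}, ConOccurs x N (transPhi P) → Subterm N P
  | .var _, h => by cases h
  | .lam _ _, h => by
    cases h with
    | here => exact .lam (.refl _)
    | conArg hmem hocc =>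
      obtain ⟨_, _, rfl⟩ := List.mem_map.1 hmem
      cases hocc
  | .app _ _, h => by
    cases h with
    | appL h => exact .appL (subterm_of_conOccurs_transPhi h)
    | appR h => exact .appR (subterm_of_conOccurs_transPhi h)

theorem PTerm.mem_of_substOfP_eq_some {xs : List ℕ} {ts : List PTerm} {y : ℕ} {u : PTerm}
    (h : PTerm.substOfP xs ts y = some u) : u ∈ ts := by
  obtain ⟨l₁, l₂, hzip, -⟩ := List.lookup_eq_some_iff.1 h
  exact (List.of_mem_zip (hzip ▸ List.mem_append_right l₁ List.mem_cons_self)).2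

theorem ConOccurs.of_psubst {x : ℕ} {N : Lam} {σ : ℕ → Option PTerm} {s : PTerm}
    (h : ConOccurs x N (PTerm.psubst σ s)) :
    ConOccurs x N s ∨ ∃ y u, σ y = some u ∧ ConOccurs x N u := by
  induction s using PTerm.psubst.induct with
  | case1 y =>
    rw [PTerm.psubst] at h
    cases hy : σ y with
    | none => rw [hy] at h; cases h
    | some u => rw [hy] at h; exact .inr ⟨y, u, hy, h⟩
  | case2 u v ihu ihv =>
    rw [PTerm.psubst] at h
    cases h with
    | appL h => exact (ihu h).imp_left .appL
    | appR h => exact (ihv h).imp_left .appR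
  | case3 z M ts ih =>
    rw [PTerm.psubst] at h
    cases h with
    | here => exact .inl .here
    | conArg hmem hocc =>
      obtain ⟨⟨t, ht⟩, -, rfl⟩ := List.mem_map.1 hmem
      exact (ih ⟨t, ht⟩ hocc).imp_left (.conArg ht)

/-- A Φ-step creates no constructors: the rule only copies the body's constructors, which are
subterms of the body, and the matched arguments, which already occur in the redex. -/
theorem PhiStep.exists_conOccurs_of_conOccurs {t u : PTerm} (hstep : PhiStep t u) {x : ℕ}
    {N : Lam} (hocc : ConOccurs x N u) : ∃ y P, ConOccurs y P t ∧ Subterm N P := by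
  induction hstep with
  | root =>
    rcases hocc.of_psubst with hbody | ⟨_, w, hw, hocc⟩
    · exact ⟨_, _, .appL .here, subterm_of_conOccurs_transPhi hbody⟩
    · refine ⟨x, N, ?_, .refl N⟩
      rcases List.mem_append.1 (PTerm.mem_of_substOfP_eq_some hw) with hmem | hmem
      · exact .appL (.conArg hmem hocc)
      · exact .appR (List.mem_singleton.1 hmem ▸ hocc)
  | appL _ ih =>
    cases hocc with
    | appL hocc =>
      obtain ⟨y, P, hP, hNP⟩ := ih hocc
      exact ⟨y, P, .appL hP, hNP⟩
    | appR hocc => exact ⟨x, N, .appR hocc, .refl N⟩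
  | appR _ ih =>
    cases hocc with
    | appL hocc => exact ⟨x, N, .appL hocc, .refl N⟩
    | appR hocc =>
      obtain ⟨y, P, hP, hNP⟩ := ih hocc
      exact ⟨y, P, .appR hP, hNP⟩
  | conArg _ ih =>
    cases hocc with
    | here => exact ⟨x, N, .here, .refl N⟩
    | conArg hmem hocc =>
      rcases List.mem_append.1 hmem with hmem | hmem
      · exact ⟨x, N, .conArg (List.mem_append_left _ hmem) hocc, .refl N⟩
      rcases List.mem_cons.1 hmem with rfl | hmem
      · obtain ⟨y, P, hP, hNP⟩ := ih hocc
        exact ⟨y, P, .conArg (List.mem_append_right _ List.mem_cons_self) hP, hNP⟩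
      · exact ⟨x, N, .conArg (List.mem_append_right _ (List.mem_cons_of_mem _ hmem)) hocc,
          .refl N⟩

/-- For every λ-term M, every Φ-term t reachable from ⟨M⟩ by finitely many Φ-steps,
and every occurrence of a constructor c_{x,N} in t, N is a subterm of M. -/
theorem constructors_are_subterms (M : Lam) (t : PTerm)
    (h : Relation.ReflTransGen PhiStep (transPhi M) t)
    (x : ℕ) (N : Lam) (hocc : ConOccurs x N t) :
    Subterm N M := by
  induction h generalizing x N with
  | refl => exact subterm_of_conOccurs_transPhi hocc
  | tail _ hstep ih =>
    obtain ⟨y, P, hP, hNP⟩ := hstep.exists_conOccurs_of_conOccurs hocc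
    exact hNP.trans (ih y P hP)
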